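/- (Per-iteration descent in expectation.) Let d, Q be positive integers with Q ≤ d, let η > 0, G ≥ 0, L > 0. Let f : ℝ^d → ℝ be differentiable with L-Lipschitz gradient (‖∇f(x) − ∇f(y)‖₂ ≤ L‖x − y‖₂ for all x, y). Let (Ω, ℱ, ℙ) be a probability space with a sub-σ-algebra ℱ_t, let x, e be ℱ_t-measurable square-integrable ℝ^d-valued random vectors, and g a square-integrable ℝ^d-valued random vector with E[g | ℱ_t] = ∇f(x) a.s. and E[‖g − ∇f(x)‖₂²] ≤ G². Set x̃ = x − e and x̃⁺ = x̃ − η g, and assume f(x̃), f(x̃⁺) are integrable. Then E[f(x̃⁺)] ≤ E[f(x̃)] − (η(1 − ηL)/2)·E[‖∇f(x)‖₂²] + (ηL²/2)·E[‖e‖₂²] + (η²L/2)·G². -/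

import Mathlib

/-!
Apply the descent lemma `f (u - η g) ≤ f u - η ⟪∇f u, g⟫ + η²L/2 ‖g‖²` at `u = x - e` and take
expectations. As `∇f (x - e)` is `ℱ_t`-measurable, the tower property replaces `g` by its
conditional mean `∇f x` in the first-order term, and
`⟪∇f (x - e), ∇f x⟫ ≥ ‖∇f x‖²/2 - ‖∇f (x - e) - ∇f x‖²/2 ≥ ‖∇f x‖²/2 - L²‖e‖²/2`.
The second-order term splits as `E‖g‖² = E‖g - ∇f x‖² + E‖∇f x‖² ≤ G² + E‖∇f x‖²`.
-/

open MeasureTheory InnerProductSpace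

theorem sq_norm_sub_sq_norm_sub_le_two_mul_inner {E : Type*} [NormedAddCommGroup E]
    [InnerProductSpace ℝ E] (a b : E) : ‖b‖ ^ 2 - ‖a - b‖ ^ 2 ≤ 2 * ⟪a, b⟫_ℝ := by
  nlinarith [norm_sub_sq_real a b, sq_nonneg ‖a‖]

section

variable {E : Type*} [NormedAddCommGroup E] [InnerProductSpace ℝ E] [CompleteSpace E]
  {f : E → ℝ} {L : ℝ}

theorem lipschitzWith_gradient_of_norm_sub_le
    (hlip : ∀ a b, ‖gradient f a - gradient f b‖ ≤ L * ‖a - b‖) :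
    LipschitzWith L.toNNReal (gradient f) :=
  LipschitzWith.of_dist_le' fun a b => by simpa only [dist_eq_norm] using hlip a b

theorem Differentiable.hasDerivAt_comp_add_smul (hf : Differentiable ℝ f) (u v : E) (t : ℝ) :
    HasDerivAt (fun s : ℝ => f (u + s • v)) ⟪gradient f (u + t • v), v⟫_ℝ t := by
  have hline : HasDerivAt (fun s : ℝ => u + s • v) v t := by
    simpa using ((hasDerivAt_id t).smul_const v).const_add u
  simpa [toDual_apply_apply, Function.comp_def] using
    (hf _).hasGradientAt.hasFDerivAt.comp_hasDerivAt t hline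

theorem Differentiable.apply_add_le_of_lipschitz_gradient (hf : Differentiable ℝ f)
    (hlip : ∀ a b, ‖gradient f a - gradient f b‖ ≤ L * ‖a - b‖) (u v : E) :
    f (u + v) ≤ f u + ⟪gradient f u, v⟫_ℝ + L / 2 * ‖v‖ ^ 2 := by
  set ψ : ℝ → ℝ := fun t => f (u + t • v) - t * ⟪gradient f u, v⟫_ℝ - L / 2 * t ^ 2 * ‖v‖ ^ 2
  have hψ : ∀ t, HasDerivAt ψ
      (⟪gradient f (u + t • v), v⟫_ℝ - ⟪gradient f u, v⟫_ℝ - L * t * ‖v‖ ^ 2) t := fun t => by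
    have hsq := ((hasDerivAt_pow 2 t).const_mul (L / 2)).mul_const (‖v‖ ^ 2)
    refine (((hf.hasDerivAt_comp_add_smul u v t).sub
      ((hasDerivAt_id t).mul_const ⟪gradient f u, v⟫_ℝ)).sub hsq).congr_deriv ?_
    simp only [one_mul]; push_cast; ring
  have hψ_nonpos : ∀ t ∈ interior (Set.Icc (0 : ℝ) 1),
      ⟪gradient f (u + t • v), v⟫_ℝ - ⟪gradient f u, v⟫_ℝ - L * t * ‖v‖ ^ 2 ≤ 0 := by
    intro t ht
    rw [interior_Icc] at ht
    rw [← inner_sub_left]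
    calc ⟪gradient f (u + t • v) - gradient f u, v⟫_ℝ - L * t * ‖v‖ ^ 2
        ≤ L * ‖u + t • v - u‖ * ‖v‖ - L * t * ‖v‖ ^ 2 := by
          gcongr
          exact (real_inner_le_norm _ _).trans (by gcongr; exact hlip _ _)
      _ = 0 := by
          rw [add_sub_cancel_left, norm_smul, Real.norm_of_nonneg ht.1.le]; ring
  have hanti := antitoneOn_of_hasDerivWithinAt_nonpos (convex_Icc 0 1)
    (fun t _ => (hψ t).continuousAt.continuousWithinAt) (fun t _ => (hψ t).hasDerivWithinAt)
    hψ_nonpos (Set.left_mem_Icc.2 zero_le_one) (Set.right_mem_Icc.2 zero_le_one) zero_le_one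
  simp only [ψ, zero_smul, add_zero, one_smul, zero_mul, one_mul, one_pow, sub_zero,
    ne_eq, OfNat.ofNat_ne_zero, not_false_eq_true, zero_pow, mul_zero] at hanti
  linarith

theorem Differentiable.apply_sub_smul_le_of_lipschitz_gradient (hf : Differentiable ℝ f)
    (hlip : ∀ a b, ‖gradient f a - gradient f b‖ ≤ L * ‖a - b‖) (u w : E) (η : ℝ) :
    f (u - η • w) ≤ f u - η * ⟪gradient f u, w⟫_ℝ + η ^ 2 * L / 2 * ‖w‖ ^ 2 := by
  have := hf.apply_add_le_of_lipschitz_gradient hlip u (-(η • w))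
  rw [← sub_eq_add_neg, inner_neg_right, inner_smul_right, norm_neg, norm_smul,
    Real.norm_eq_abs, mul_pow, sq_abs] at this
  linarith

variable {Ω : Type*} {m m0 : MeasurableSpace Ω} {μ : Measure Ω}

theorem MeasureTheory.MemLp.integrable_inner {F : Type*} [NormedAddCommGroup F]
    [InnerProductSpace ℝ F] {u w : Ω → F} (hu : MemLp u 2 μ) (hw : MemLp w 2 μ) :
    Integrable (fun ω => ⟪u ω, w ω⟫_ℝ) μ := by
  refine (L2.integrable_inner (𝕜 := ℝ) (hu.toLp u) (hw.toLp w)).congr ?_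
  filter_upwards [hu.coeFn_toLp, hw.coeFn_toLp] with ω hu' hw'
  rw [hu', hw']

theorem LipschitzWith.comp_memLp_of_isFiniteMeasure {F G : Type*} [NormedAddCommGroup F]
    [NormedAddCommGroup G] [IsFiniteMeasure μ] {K : NNReal} {φ : F → G}
    (hφ : LipschitzWith K φ) {u : Ω → F} {p : ENNReal} (hu : MemLp u p μ) :
    MemLp (fun ω => φ (u ω)) p μ := by
  refine ((memLp_const ‖φ 0‖).add (hu.norm.const_mul K)).of_le
    (hφ.continuous.comp_aestronglyMeasurable hu.1) (ae_of_all _ fun ω => ?_)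
  have hφu := hφ.norm_sub_le (u ω) 0
  rw [sub_zero] at hφu
  rw [Pi.add_apply, Real.norm_of_nonneg (by positivity)]
  linarith [norm_sub_norm_le (φ (u ω)) (φ 0)]

theorem integral_inner_eq_of_condExp_ae_eq (hm : m ≤ m0) [SigmaFinite (μ.trim hm)]
    {h g G : Ω → E} (hh : StronglyMeasurable[m] h) (hg : Integrable g μ)
    (hhg : Integrable (fun ω => ⟪h ω, g ω⟫_ℝ) μ) (hcond : μ[g|m] =ᵐ[μ] G) :
    ∫ ω, ⟪h ω, g ω⟫_ℝ ∂μ = ∫ ω, ⟪h ω, G ω⟫_ℝ ∂μ := by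
  rw [← integral_condExp hm]
  refine integral_congr_ae ?_
  filter_upwards [condExp_bilin_of_stronglyMeasurable_left (innerSL ℝ) hh hhg hg, hcond]
    with ω hpull hG
  rw [← hG]
  exact hpull

theorem integral_norm_sq_eq_of_condExp_ae_eq [IsFiniteMeasure μ] (hm : m ≤ m0)
    {g G : Ω → E} (hg : MemLp g 2 μ) (hG : MemLp G 2 μ) (hGm : StronglyMeasurable[m] G)
    (hcond : μ[g|m] =ᵐ[μ] G) :
    ∫ ω, ‖g ω‖ ^ 2 ∂μ = ∫ ω, ‖g ω - G ω‖ ^ 2 ∂μ + ∫ ω, ‖G ω‖ ^ 2 ∂μ := by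
  have hcross : ∫ ω, ⟪g ω, G ω⟫_ℝ ∂μ = ∫ ω, ‖G ω‖ ^ 2 ∂μ := calc
    _ = ∫ ω, ⟪G ω, g ω⟫_ℝ ∂μ := integral_congr_ae (ae_of_all _ fun ω => real_inner_comm _ _)
    _ = ∫ ω, ⟪G ω, G ω⟫_ℝ ∂μ := integral_inner_eq_of_condExp_ae_eq hm hGm
          (hg.integrable one_le_two) (hG.integrable_inner hg) hcond
    _ = _ := by simp_rw [real_inner_self_eq_norm_sq]
  have hexpand : Integrable (fun ω => ‖g ω‖ ^ 2 - 2 * ⟪g ω, G ω⟫_ℝ) μ :=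
    hg.norm.integrable_sq.sub ((hg.integrable_inner hG).const_mul 2)
  simp_rw [norm_sub_sq_real]
  rw [integral_add hexpand hG.norm.integrable_sq,
    integral_sub hg.norm.integrable_sq ((hg.integrable_inner hG).const_mul 2),
    integral_const_mul, hcross]
  ring

theorem Differentiable.integral_apply_sub_smul_le_of_lipschitz_gradient (hf : Differentiable ℝ f)
    (hlip : ∀ a b, ‖gradient f a - gradient f b‖ ≤ L * ‖a - b‖) {u w : Ω → E} (η : ℝ)
    (hfu : Integrable (fun ω => f (u ω)) μ) (hfuw : Integrable (fun ω => f (u ω - η • w ω)) μ)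
    (huw : Integrable (fun ω => ⟪gradient f (u ω), w ω⟫_ℝ) μ)
    (hw : Integrable (fun ω => ‖w ω‖ ^ 2) μ) :
    ∫ ω, f (u ω - η • w ω) ∂μ ≤ ∫ ω, f (u ω) ∂μ - η * ∫ ω, ⟪gradient f (u ω), w ω⟫_ℝ ∂μ
      + η ^ 2 * L / 2 * ∫ ω, ‖w ω‖ ^ 2 ∂μ := by
  have hfirst : Integrable (fun ω => f (u ω) - η * ⟪gradient f (u ω), w ω⟫_ℝ) μ :=
    hfu.sub (huw.const_mul η)
  calc ∫ ω, f (u ω - η • w ω) ∂μ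
      ≤ ∫ ω, (f (u ω) - η * ⟪gradient f (u ω), w ω⟫_ℝ + η ^ 2 * L / 2 * ‖w ω‖ ^ 2) ∂μ :=
        integral_mono hfuw (hfirst.add (hw.const_mul _))
          fun ω => hf.apply_sub_smul_le_of_lipschitz_gradient hlip (u ω) (w ω) η
    _ = _ := by
        rw [integral_add hfirst (hw.const_mul _), integral_sub hfu (huw.const_mul η),
          integral_const_mul, integral_const_mul]

theorem integral_inner_gradient_comp_sub_ge
    (hlip : ∀ a b, ‖gradient f a - gradient f b‖ ≤ L * ‖a - b‖) {x e : Ω → E}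
    (hx : MemLp (fun ω => gradient f (x ω)) 2 μ)
    (hxe : MemLp (fun ω => gradient f (x ω - e ω)) 2 μ) (he : MemLp e 2 μ) :
    (∫ ω, ‖gradient f (x ω)‖ ^ 2 ∂μ) / 2 - L ^ 2 / 2 * ∫ ω, ‖e ω‖ ^ 2 ∂μ
      ≤ ∫ ω, ⟪gradient f (x ω - e ω), gradient f (x ω)⟫_ℝ ∂μ := by
  have hpointwise : ∀ ω, ‖gradient f (x ω)‖ ^ 2 / 2 - L ^ 2 / 2 * ‖e ω‖ ^ 2
      ≤ ⟪gradient f (x ω - e ω), gradient f (x ω)⟫_ℝ := fun ω => by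
    have hdiff : ‖gradient f (x ω - e ω) - gradient f (x ω)‖ ^ 2 ≤ L ^ 2 * ‖e ω‖ ^ 2 := by
      rw [← mul_pow]
      gcongr
      simpa using hlip (x ω - e ω) (x ω)
    linarith [sq_norm_sub_sq_norm_sub_le_two_mul_inner
      (gradient f (x ω - e ω)) (gradient f (x ω))]
  calc (∫ ω, ‖gradient f (x ω)‖ ^ 2 ∂μ) / 2 - L ^ 2 / 2 * ∫ ω, ‖e ω‖ ^ 2 ∂μ
      = ∫ ω, (‖gradient f (x ω)‖ ^ 2 / 2 - L ^ 2 / 2 * ‖e ω‖ ^ 2) ∂μ := by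
        rw [integral_sub (hx.norm.integrable_sq.div_const 2) (he.norm.integrable_sq.const_mul _),
          integral_div, integral_const_mul]
    _ ≤ _ := integral_mono ((hx.norm.integrable_sq.div_const 2).sub
        (he.norm.integrable_sq.const_mul _)) (hxe.integrable_inner hx) hpointwise

end

theorem stmt14_general (d : ℕ)
    (η G L : ℝ) (hη : 0 < η) (hL : 0 < L)
    (f : EuclideanSpace ℝ (Fin d) → ℝ) (hf : Differentiable ℝ f)
    (hlip : ∀ a b : EuclideanSpace ℝ (Fin d),
      ‖gradient f a - gradient f b‖ ≤ L * ‖a - b‖)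
    {Ω : Type*} {m : MeasurableSpace Ω} (P : Measure Ω) [IsProbabilityMeasure P]
    (ℱt : MeasurableSpace Ω) (hℱt : ℱt ≤ m)
    (x e g : Ω → EuclideanSpace ℝ (Fin d))
    (hx : StronglyMeasurable[ℱt] x) (he : StronglyMeasurable[ℱt] e)
    (hxL2 : MemLp x 2 P) (heL2 : MemLp e 2 P) (hgL2 : MemLp g 2 P)
    (hcond : P[g|ℱt] =ᵐ[P] fun ω => gradient f (x ω))
    (hvar : ∫ ω, ‖g ω - gradient f (x ω)‖ ^ 2 ∂P ≤ G ^ 2)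
    (hint1 : Integrable (fun ω => f (x ω - e ω)) P)
    (hint2 : Integrable (fun ω => f (x ω - e ω - η • g ω)) P) :
    ∫ ω, f (x ω - e ω - η • g ω) ∂P ≤
      ∫ ω, f (x ω - e ω) ∂P
      - η * (1 - η * L) / 2 * ∫ ω, ‖gradient f (x ω)‖ ^ 2 ∂P
      + η * L ^ 2 / 2 * ∫ ω, ‖e ω‖ ^ 2 ∂P
      + η ^ 2 * L / 2 * G ^ 2 := by
  have hgrad := lipschitzWith_gradient_of_norm_sub_le hlip
  have hDx : MemLp (fun ω => gradient f (x ω)) 2 P :=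
    hgrad.comp_memLp_of_isFiniteMeasure hxL2
  have hDxe : MemLp (fun ω => gradient f (x ω - e ω)) 2 P :=
    hgrad.comp_memLp_of_isFiniteMeasure (hxL2.sub heL2)
  have hdescent := hf.integral_apply_sub_smul_le_of_lipschitz_gradient hlip η hint1 hint2
    (hDxe.integrable_inner hgL2) hgL2.norm.integrable_sq
  have htower := integral_inner_eq_of_condExp_ae_eq (h := fun ω => gradient f (x ω - e ω)) hℱt
    (hgrad.continuous.comp_stronglyMeasurable (hx.sub he)) (hgL2.integrable one_le_two)
    (hDxe.integrable_inner hgL2) hcond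
  have hsecond := integral_norm_sq_eq_of_condExp_ae_eq hℱt hgL2 hDx
    (hgrad.continuous.comp_stronglyMeasurable hx) hcond
  have hcross := integral_inner_gradient_comp_sub_ge hlip hDx hDxe heL2
  rw [htower, hsecond] at hdescent
  have hcross_η := mul_le_mul_of_nonneg_left hcross hη.le
  have hvar_η := mul_le_mul_of_nonneg_left hvar (by positivity : 0 ≤ η ^ 2 * L / 2)
  linarith

theorem stmt14 (d Q : ℕ) (hd : 0 < d) (hQ : 0 < Q) (hQd : Q ≤ d)
    (η G L : ℝ) (hη : 0 < η) (hG : 0 ≤ G) (hL : 0 < L)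
    (f : EuclideanSpace ℝ (Fin d) → ℝ) (hf : Differentiable ℝ f)
    (hlip : ∀ a b : EuclideanSpace ℝ (Fin d),
      ‖gradient f a - gradient f b‖ ≤ L * ‖a - b‖)
    {Ω : Type*} {m : MeasurableSpace Ω} (P : Measure Ω) [IsProbabilityMeasure P]
    (ℱt : MeasurableSpace Ω) (hℱt : ℱt ≤ m)
    (x e g : Ω → EuclideanSpace ℝ (Fin d))
    (hx : StronglyMeasurable[ℱt] x) (he : StronglyMeasurable[ℱt] e)
    (hxL2 : MemLp x 2 P) (heL2 : MemLp e 2 P) (hgL2 : MemLp g 2 P)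
    (hcond : P[g|ℱt] =ᵐ[P] fun ω => gradient f (x ω))
    (hvar : ∫ ω, ‖g ω - gradient f (x ω)‖ ^ 2 ∂P ≤ G ^ 2)
    (hint1 : Integrable (fun ω => f (x ω - e ω)) P)
    (hint2 : Integrable (fun ω => f (x ω - e ω - η • g ω)) P) :
    ∫ ω, f (x ω - e ω - η • g ω) ∂P ≤
      ∫ ω, f (x ω - e ω) ∂P
      - η * (1 - η * L) / 2 * ∫ ω, ‖gradient f (x ω)‖ ^ 2 ∂P
      + η * L ^ 2 / 2 * ∫ ω, ‖e ω‖ ^ 2 ∂P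
      + η ^ 2 * L / 2 * G ^ 2 :=
  stmt14_general d η G L hη hL f hf hlip P ℱt hℱt x e g hx he hxL2 heL2 hgL2 hcond hvar hint1 hint2
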